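/- Monotonicity of the two-parameter Rényi mutual information in β: (1) for every fixed α ∈ (1,∞), the map β ↦ Ĩ_{α,β}(X:Y) is non-decreasing on (0,∞); (2) for every fixed α ∈ (0,1), the map β ↦ Ĩ_{α,β}(X:Y) is non-increasing on (0,∞). -/
import Mathlib


open scoped BigOperators

noncomputable section

variable {𝓧 𝓨 : Type*} [Fintype 𝓧] [Fintype 𝓨]

/-- Marginal distribution of the first component. -/
def pX (P : 𝓧 × 𝓨 → ℝ) (x : 𝓧) : ℝ := ∑ y, P (x, y)

/-- Marginal distribution of the second component. -/
def pY (P : 𝓧 × 𝓨 → ℝ) (y : 𝓨) : ℝ := ∑ x, P (x, y)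

/-- Conditional distribution `P_{X|Y}(x|y)`. -/
def pCond (P : 𝓧 × 𝓨 → ℝ) (x : 𝓧) (y : 𝓨) : ℝ := P (x, y) / pY P y

/-- Two-parameter Rényi mutual information `Ĩ_{α,β}(X:Y)`. -/
def Itilde (P : 𝓧 × 𝓨 → ℝ) (α β : ℝ) : ℝ :=
  α / (β * (α - 1)) *
    Real.logb 2 (∑ y, if 0 < pY P y then
      pY P y *
        (∑ x, if 0 < pX P x then pX P x ^ (1 - α) * pCond P x y ^ α else 0) ^ (β / α)
      else 0)

/-- Auxiliary: the inner sum `T_y`. -/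
def Tfun (P : 𝓧 × 𝓨 → ℝ) (α : ℝ) (y : 𝓨) : ℝ :=
  ∑ x, if 0 < pX P x then pX P x ^ (1 - α) * pCond P x y ^ α else 0

/-- Auxiliary: the outer sum `S(β)`. -/
def Sfun (P : 𝓧 × 𝓨 → ℝ) (α β : ℝ) : ℝ :=
  ∑ y, if 0 < pY P y then pY P y * Tfun P α y ^ (β / α) else 0

lemma Itilde_eq (P : 𝓧 × 𝓨 → ℝ) (α β : ℝ) :
    Itilde P α β = α / (β * (α - 1)) * Real.logb 2 (Sfun P α β) := rfl

lemma pX_nonneg (P : 𝓧 × 𝓨 → ℝ) (hP : ∀ p, 0 ≤ P p) (x : 𝓧) : 0 ≤ pX P x :=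
  Finset.sum_nonneg fun _ _ => hP _

lemma pY_nonneg (P : 𝓧 × 𝓨 → ℝ) (hP : ∀ p, 0 ≤ P p) (y : 𝓨) : 0 ≤ pY P y :=
  Finset.sum_nonneg fun _ _ => hP _

lemma Tfun_nonneg (P : 𝓧 × 𝓨 → ℝ) (hP : ∀ p, 0 ≤ P p) (α : ℝ) (y : 𝓨) :
    0 ≤ Tfun P α y := by
  refine Finset.sum_nonneg fun x _ => ?_
  split
  · have h1 : (0:ℝ) ≤ pX P x := pX_nonneg P hP x
    have h2 : (0:ℝ) ≤ pCond P x y := div_nonneg (hP _) (pY_nonneg P hP y)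
    exact mul_nonneg (Real.rpow_nonneg h1 _) (Real.rpow_nonneg h2 _)
  · exact le_rfl

lemma exists_good (P : 𝓧 × 𝓨 → ℝ) (hP : ∀ p, 0 ≤ P p) (hPsum : ∑ p, P p = 1) (α : ℝ) :
    ∃ y, 0 < pY P y ∧ 0 < Tfun P α y := by
  have hex : ∃ p, 0 < P p := by
    by_contra h
    push_neg at h
    have : ∀ p, P p = 0 := fun p => le_antisymm (h p) (hP p)
    simp [this] at hPsum
  obtain ⟨⟨x, y⟩, hxy⟩ := hex
  have hpY : 0 < pY P y :=
    lt_of_lt_of_le hxy (Finset.single_le_sum (f := fun x' => P (x', y))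
      (fun x' _ => hP _) (Finset.mem_univ x))
  have hpX : 0 < pX P x :=
    lt_of_lt_of_le hxy (Finset.single_le_sum (f := fun y' => P (x, y'))
      (fun y' _ => hP _) (Finset.mem_univ y))
  refine ⟨y, hpY, ?_⟩
  have hterm : 0 < (if 0 < pX P x then pX P x ^ (1 - α) * pCond P x y ^ α else 0) := by
    rw [if_pos hpX]
    exact mul_pos (Real.rpow_pos_of_pos hpX _)
      (Real.rpow_pos_of_pos (div_pos hxy hpY) _)
  have hnn : ∀ x' : 𝓧,
      0 ≤ (if 0 < pX P x' then pX P x' ^ (1 - α) * pCond P x' y ^ α else 0) := by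
    intro x'
    split
    · have h1 : (0:ℝ) ≤ pX P x' := pX_nonneg P hP x'
      have h2 : (0:ℝ) ≤ pCond P x' y := div_nonneg (hP _) (pY_nonneg P hP y)
      exact mul_nonneg (Real.rpow_nonneg h1 _) (Real.rpow_nonneg h2 _)
    · exact le_rfl
  exact lt_of_lt_of_le hterm (Finset.single_le_sum
    (f := fun x' => if 0 < pX P x' then pX P x' ^ (1 - α) * pCond P x' y ^ α else 0)
    (fun x' _ => hnn x') (Finset.mem_univ x))

lemma Sfun_pos (P : 𝓧 × 𝓨 → ℝ) (hP : ∀ p, 0 ≤ P p) (hPsum : ∑ p, P p = 1) (α β : ℝ) :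
    0 < Sfun P α β := by
  obtain ⟨y, hpY, hT⟩ := exists_good P hP hPsum α
  have hterm : 0 < (if 0 < pY P y then pY P y * Tfun P α y ^ (β / α) else 0) := by
    rw [if_pos hpY]
    exact mul_pos hpY (Real.rpow_pos_of_pos hT _)
  have hnn : ∀ y' : 𝓨,
      0 ≤ (if 0 < pY P y' then pY P y' * Tfun P α y' ^ (β / α) else 0) := by
    intro y'
    split
    · exact mul_nonneg (pY_nonneg P hP y') (Real.rpow_nonneg (Tfun_nonneg P hP α y') _)
    · exact le_rfl
  exact lt_of_lt_of_le hterm (Finset.single_le_sum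
    (f := fun y' => if 0 < pY P y' then pY P y' * Tfun P α y' ^ (β / α) else 0)
    (fun y' _ => hnn y') (Finset.mem_univ y))

lemma key_ineq (P : 𝓧 × 𝓨 → ℝ) (hP : ∀ p, 0 ≤ P p) (hPsum : ∑ p, P p = 1)
    {α b₁ b₂ : ℝ} (hα : 0 < α) (hb₁ : 0 < b₁) (hb : b₁ ≤ b₂) :
    Sfun P α b₁ ≤ Sfun P α b₂ ^ (b₁ / b₂) := by
  have hb₂ : 0 < b₂ := lt_of_lt_of_le hb₁ hb
  set w : 𝓨 → ℝ := fun y => if 0 < pY P y then pY P y else 0 with hw_def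
  set z : 𝓨 → ℝ := fun y => if 0 < pY P y then Tfun P α y ^ (b₁ / α) else 0 with hz_def
  have hp : (1:ℝ) ≤ b₂ / b₁ := (one_le_div hb₁).mpr hb
  have hw : ∀ y ∈ Finset.univ, 0 ≤ w y := by
    intro y _; simp only [hw_def]; split
    · exact pY_nonneg P hP y
    · exact le_rfl
  have hw' : ∑ y, w y = 1 := by
    have h1 : ∑ y, w y = ∑ y, pY P y := by
      refine Finset.sum_congr rfl fun y _ => ?_
      simp only [hw_def]
      split
      · rfl
      · next h => exact ((le_antisymm (not_lt.mp h) (pY_nonneg P hP y)).symm)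
    rw [h1, ← hPsum, Fintype.sum_prod_type]
    simp only [pY]
    exact Finset.sum_comm
  have hz : ∀ y ∈ Finset.univ, 0 ≤ z y := by
    intro y _; simp only [hz_def]; split
    · exact Real.rpow_nonneg (Tfun_nonneg P hP α y) _
    · exact le_rfl
  have hmain := Real.arith_mean_le_rpow_mean Finset.univ w z hw hw' hz hp
  have h1 : ∑ y, w y * z y = Sfun P α b₁ := by
    refine Finset.sum_congr rfl fun y _ => ?_
    simp only [hw_def, hz_def, Sfun]
    split
    · rfl
    · simp
  have h2 : ∑ y, w y * z y ^ (b₂ / b₁) = Sfun P α b₂ := by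
    refine Finset.sum_congr rfl fun y _ => ?_
    simp only [hw_def, hz_def, Sfun]
    split
    · have hc : b₁ / α * (b₂ / b₁) = b₂ / α := by
        field_simp
      rw [← Real.rpow_mul (Tfun_nonneg P hP α y), hc]
    · simp
  rw [h1, h2] at hmain
  have h3 : (1 : ℝ) / (b₂ / b₁) = b₁ / b₂ := by
    field_simp
  rwa [h3] at hmain

/-- monotonicity of `Ĩ_{α,β}(X:Y)` in `β`: non-decreasing for
`α ∈ (1,∞)`, non-increasing for `α ∈ (0,1)`. -/
theorem Itilde_monotone_in_beta
    [Nonempty 𝓧] [Nonempty 𝓨]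
    (P : 𝓧 × 𝓨 → ℝ) (hP : ∀ p, 0 ≤ P p) (hPsum : ∑ p, P p = 1)
    (α : ℝ) :
    (1 < α → ∀ b₁ b₂ : ℝ, 0 < b₁ → b₁ ≤ b₂ → Itilde P α b₁ ≤ Itilde P α b₂) ∧
    (0 < α → α < 1 → ∀ b₁ b₂ : ℝ, 0 < b₁ → b₁ ≤ b₂ →
      Itilde P α b₂ ≤ Itilde P α b₁) := by
  have hlog2 : (0:ℝ) < Real.log 2 := Real.log_pos one_lt_two
  have main : ∀ {α : ℝ}, 0 < α → ∀ b₁ b₂ : ℝ, 0 < b₁ → b₁ ≤ b₂ →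
      Real.log (Sfun P α b₁) / b₁ ≤ Real.log (Sfun P α b₂) / b₂ := by
    intro α hα b₁ b₂ hb₁ hb
    have hb₂ : 0 < b₂ := lt_of_lt_of_le hb₁ hb
    have h1 : Sfun P α b₁ ≤ Sfun P α b₂ ^ (b₁ / b₂) :=
      key_ineq P hP hPsum hα hb₁ hb
    have hS₁ : 0 < Sfun P α b₁ := Sfun_pos P hP hPsum α b₁
    have hS₂ : 0 < Sfun P α b₂ := Sfun_pos P hP hPsum α b₂
    have h2 : Real.log (Sfun P α b₁) ≤ (b₁ / b₂) * Real.log (Sfun P α b₂) := by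
      calc Real.log (Sfun P α b₁) ≤ Real.log (Sfun P α b₂ ^ (b₁ / b₂)) :=
            Real.log_le_log hS₁ h1
        _ = (b₁ / b₂) * Real.log (Sfun P α b₂) := Real.log_rpow hS₂ _
    rw [div_le_div_iff₀ hb₁ hb₂]
    calc Real.log (Sfun P α b₁) * b₂ ≤ ((b₁ / b₂) * Real.log (Sfun P α b₂)) * b₂ := by
          exact mul_le_mul_of_nonneg_right h2 hb₂.le
      _ = Real.log (Sfun P α b₂) * b₁ := by field_simp
  constructor
  · intro hα1 b₁ b₂ hb₁ hb
    have hα : 0 < α := lt_trans one_pos hα1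
    have hkey := main hα b₁ b₂ hb₁ hb
    have hb₂ : 0 < b₂ := lt_of_lt_of_le hb₁ hb
    have hc : 0 ≤ α / (α - 1) / Real.log 2 :=
      div_nonneg (div_nonneg hα.le (by linarith)) hlog2.le
    have e : ∀ b : ℝ, 0 < b → Itilde P α b =
        (α / (α - 1) / Real.log 2) * (Real.log (Sfun P α b) / b) := by
      intro b hbpos
      have h1 : b ≠ 0 := hbpos.ne'
      have h2 : α - 1 ≠ 0 := by intro h; rw [sub_eq_zero] at h; exact absurd h.symm hα1.ne
      have h3 : Real.log 2 ≠ 0 := hlog2.ne'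
      rw [Itilde_eq, Real.logb]
      field_simp
      try ring
      try tauto
    rw [e b₁ hb₁, e b₂ hb₂]
    exact mul_le_mul_of_nonneg_left hkey hc
  · intro hα hα1 b₁ b₂ hb₁ hb
    have hkey := main hα b₁ b₂ hb₁ hb
    have hb₂ : 0 < b₂ := lt_of_lt_of_le hb₁ hb
    have hc : α / (α - 1) / Real.log 2 ≤ 0 := by
      apply div_nonpos_of_nonpos_of_nonneg _ hlog2.le
      exact div_nonpos_of_nonneg_of_nonpos hα.le (by linarith)
    have e : ∀ b : ℝ, 0 < b → Itilde P α b =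
        (α / (α - 1) / Real.log 2) * (Real.log (Sfun P α b) / b) := by
      intro b hbpos
      have h1 : b ≠ 0 := hbpos.ne'
      have h2 : α - 1 ≠ 0 := by intro h; rw [sub_eq_zero] at h; exact absurd h hα1.ne
      have h3 : Real.log 2 ≠ 0 := hlog2.ne'
      rw [Itilde_eq, Real.logb]
      field_simp
      try ring
      try tauto
    rw [e b₁ hb₁, e b₂ hb₂]
    exact mul_le_mul_of_nonpos_left hkey hc
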